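/- Let (R,‖·‖) be a normed graded ring over ℤ and (M,‖·‖_M) a normed h-graded (R,‖·‖)-module such that M ⊗ ℚ is a finitely generated R ⊗ ℚ-module and Mₙ = 0 for n < 0. Suppose there exist A, e, υ ∈ ℝ_{>0} with λ_ℚ(Rₙ,‖·‖ₙ) ≤ A nᵉ υⁿ for all n ≥ 1. Then there exists A' ∈ ℝ_{>0} with λ_ℚ(Mₙ,‖·‖_{Mₙ}) ≤ A' nᵉ υ^{n/h} for all n ≥ 1. -/

import Mathlib

/-!
Pick finitely many generators `g` of `M ⊗ ℚ` over `R ⊗ ℚ`; their homogeneous components `g_d`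
live in finitely many degrees `0 ≤ d ≤ D`. In degree `k`, the products `b • g_d` with `b`
running over a short `ℚ`-basis of `Rₙ` and `h n + d = k` span `M_k ⊗ ℚ`, and each has norm
at most `λ_ℚ(Rₙ) · max ‖g_d‖`. As `k - D ≤ h n ≤ k`, the bound `A nᵉ υⁿ` becomes
`A' kᵉ υ^{k/h}`.
-/

open scoped TensorProduct

/-- `N` is a norm on the real vector space `V`. -/
def IsNorm {V : Type*} [AddCommGroup V] [Module ℝ V] (N : V → ℝ) : Prop :=
  (∀ v, N v = 0 ↔ v = 0) ∧ (∀ (r : ℝ) (v : V), N (r • v) = |r| * N v) ∧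
    ∀ v w, N (v + w) ≤ N v + N w

/-- `λ_ℚ(M, N)`: the infimum of all `l` such that some elements of `M` forming a
`ℚ`-basis of `M ⊗ ℚ` all have norm `≤ l`. -/
noncomputable def lambdaQ {M : Type*} [AddCommGroup M] (N : ℝ ⊗[ℤ] M → ℝ) : ℝ :=
  sInf {l | ∃ (n : ℕ) (e : Fin n → M),
    LinearIndependent ℚ (fun i => ((1 : ℚ) ⊗ₜ[ℤ] e i : ℚ ⊗[ℤ] M)) ∧
    Submodule.span ℚ (Set.range fun i => ((1 : ℚ) ⊗ₜ[ℤ] e i : ℚ ⊗[ℤ] M)) = ⊤ ∧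
    ∀ i, N ((1 : ℝ) ⊗ₜ[ℤ] e i) ≤ l}

lemma IsNorm.map_zero {V : Type*} [AddCommGroup V] [Module ℝ V] {N : V → ℝ} (hN : IsNorm N) :
    N 0 = 0 :=
  (hN.1 0).2 rfl

lemma IsNorm.nonneg {V : Type*} [AddCommGroup V] [Module ℝ V] {N : V → ℝ} (hN : IsNorm N)
    (v : V) : 0 ≤ N v := by
  have hneg : N (-v) = N v := by
    rw [← neg_one_smul ℝ v, hN.2.1, abs_neg, abs_one, one_mul]
  have := hN.2.2 v (-v)
  rw [add_neg_cancel, hN.map_zero, hneg] at this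
  linarith

section LambdaQ

variable {M : Type*} [AddCommGroup M]

def lambdaQSet (N : ℝ ⊗[ℤ] M → ℝ) : Set ℝ :=
  {l | ∃ (n : ℕ) (e : Fin n → M),
    LinearIndependent ℚ (fun i => ((1 : ℚ) ⊗ₜ[ℤ] e i : ℚ ⊗[ℤ] M)) ∧
    Submodule.span ℚ (Set.range fun i => ((1 : ℚ) ⊗ₜ[ℤ] e i : ℚ ⊗[ℤ] M)) = ⊤ ∧
    ∀ i, N ((1 : ℝ) ⊗ₜ[ℤ] e i) ≤ l}

lemma lambdaQ_eq_sInf (N : ℝ ⊗[ℤ] M → ℝ) : lambdaQ N = sInf (lambdaQSet N) := rfl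

lemma mem_lambdaQSet_of_span {N : ℝ ⊗[ℤ] M → ℝ} {ι : Type*} [Finite ι] (x : ι → M)
    (hx : Submodule.span ℚ (Set.range fun i => ((1 : ℚ) ⊗ₜ[ℤ] x i : ℚ ⊗[ℤ] M)) = ⊤)
    {l : ℝ} (hxl : ∀ i, N ((1 : ℝ) ⊗ₜ[ℤ] x i) ≤ l) : l ∈ lambdaQSet N := by
  obtain ⟨κ, a, ha, hspan, hli⟩ :=
    exists_linearIndependent' ℚ fun i => ((1 : ℚ) ⊗ₜ[ℤ] x i : ℚ ⊗[ℤ] M)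
  have : Finite κ := Finite.of_injective a ha
  obtain ⟨n, ⟨σ⟩⟩ := Finite.exists_equiv_fin κ
  refine ⟨n, x ∘ a ∘ σ.symm, hli.comp σ.symm σ.symm.injective, ?_, fun i => hxl _⟩
  rw [← hx, ← hspan]
  exact congrArg _ (σ.symm.surjective.range_comp ((fun i => (1 : ℚ) ⊗ₜ[ℤ] x i) ∘ a))

lemma lambdaQSet_nonempty [Module.Finite ℤ M] (N : ℝ ⊗[ℤ] M → ℝ) :
    (lambdaQSet N).Nonempty := by
  obtain ⟨n, g, hg⟩ := Module.Finite.exists_fin (R := ℤ) (M := M)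
  have hspan := Submodule.baseChange_span (R := ℤ) ℚ (Set.range g)
  rw [hg, Submodule.baseChange_top, ← Set.range_comp] at hspan
  obtain ⟨l, hl⟩ := (Set.finite_range fun i => N ((1 : ℝ) ⊗ₜ[ℤ] g i)).bddAbove
  exact ⟨l, mem_lambdaQSet_of_span g hspan.symm fun i => hl ⟨i, rfl⟩⟩

lemma lambdaQ_le_of_mem {N : ℝ ⊗[ℤ] M → ℝ} {l : ℝ} (hl : l ∈ lambdaQSet N) (hl0 : 0 ≤ l) :
    lambdaQ N ≤ l := by
  by_cases hbdd : BddBelow (lambdaQSet N)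
  · exact csInf_le hbdd hl
  · rwa [lambdaQ_eq_sInf, Real.sInf_of_not_bddBelow hbdd]

lemma lambdaQ_le_of_span {N : ℝ ⊗[ℤ] M → ℝ} {ι : Type*} [Finite ι] (x : ι → M)
    (hx : Submodule.span ℚ (Set.range fun i => ((1 : ℚ) ⊗ₜ[ℤ] x i : ℚ ⊗[ℤ] M)) = ⊤)
    {l : ℝ} (hl0 : 0 ≤ l) (hxl : ∀ i, N ((1 : ℝ) ⊗ₜ[ℤ] x i) ≤ l) : lambdaQ N ≤ l :=
  lambdaQ_le_of_mem (mem_lambdaQSet_of_span x hx hxl) hl0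

lemma exists_span_le_of_lambdaQ_lt [Module.Finite ℤ M] {N : ℝ ⊗[ℤ] M → ℝ} {c : ℝ}
    (hc : lambdaQ N < c) :
    ∃ (n : ℕ) (e : Fin n → M),
      Submodule.span ℚ (Set.range fun i => ((1 : ℚ) ⊗ₜ[ℤ] e i : ℚ ⊗[ℤ] M)) = ⊤ ∧
      ∀ i, N ((1 : ℝ) ⊗ₜ[ℤ] e i) ≤ c := by
  obtain ⟨l, ⟨n, e, -, hspan, hle⟩, hlc⟩ := exists_lt_of_csInf_lt (lambdaQSet_nonempty N) hc
  exact ⟨n, e, hspan, fun i => (hle i).trans hlc.le⟩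

end LambdaQ

section Decomposition

open DirectSum

variable {ι R M : Type*} [DecidableEq ι] [CommSemiring R] [AddCommMonoid M] [Module R M]
  (ℳ : ι → Submodule R M) [Decomposition ℳ]

lemma exists_decompose_eq_zero_of_lt [Preorder ι] [Nonempty ι] [IsDirectedOrder ι]
    (s : Finset M) : ∃ D : ι, ∀ g ∈ s, ∀ d, D < d → decompose ℳ g d = 0 := by
  classical
  obtain ⟨D, hD⟩ := (s.biUnion fun g => DFinsupp.support (decompose ℳ g)).exists_le
  refine ⟨D, fun g hg d hDd => ?_⟩
  by_contra hne
  exact not_le_of_gt hDd (hD d (Finset.mem_biUnion.2 ⟨g, hg, DFinsupp.mem_support_iff.2 hne⟩))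

lemma exists_norm_decompose_le {S : Type*} [AddCommMonoid S] [Module R S]
    (NM : ∀ d, S ⊗[R] ℳ d → ℝ) (hNM : ∀ d, NM d 0 = 0) (t : S) (s : Finset M) :
    ∃ G, 0 < G ∧ ∀ g ∈ s, ∀ d, NM d (t ⊗ₜ[R] decompose ℳ g d) ≤ G := by
  classical
  obtain ⟨G, hG⟩ := (s.biUnion fun g => (DFinsupp.support (decompose ℳ g)).image
    fun d => NM d (t ⊗ₜ[R] decompose ℳ g d)).bddAbove
  refine ⟨max G 1, by positivity, fun g hg d => ?_⟩
  by_cases hd : decompose ℳ g d = 0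
  · rw [hd, TensorProduct.tmul_zero, hNM]
    positivity
  · refine (hG ?_).trans (le_max_left _ _)
    simp only [Finset.coe_biUnion, Finset.coe_image, Set.mem_iUnion, Set.mem_image]
    exact ⟨g, hg, d, DFinsupp.mem_support_iff.2 hd, rfl⟩

lemma decompose_smul_of_shift [AddCommGroup ι] {A : Type*} [Monoid A] [DistribMulAction A M]
    {b : A} {t : ι} (hb : ∀ d, ∀ m ∈ ℳ d, b • m ∈ ℳ (t + d)) (g : M) (k : ι) :
    (decompose ℳ (b • g) k : M) = b • (decompose ℳ g (k - t) : M) := by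
  induction g using Decomposition.inductionOn ℳ with
  | zero => simp
  | @homogeneous d m =>
    by_cases hk : t + d = k
    · subst hk
      rw [decompose_of_mem_same ℳ (hb _ m m.2), add_sub_cancel_left,
        decompose_of_mem_same ℳ m.2]
    · rw [decompose_of_mem_ne ℳ (hb _ m m.2) hk,
        decompose_of_mem_ne ℳ m.2 (by rintro rfl; simp at hk), smul_zero]
  | add g₁ g₂ h₁ h₂ =>
    simp only [smul_add, decompose_add, DirectSum.add_apply, Submodule.coe_add, h₁, h₂]

end Decomposition

section HGradedModule

open DirectSum

variable {A M : Type*} [CommRing A] {𝒜 : ℕ → Submodule ℤ A} [AddCommGroup M] [Module A M]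
  {ℳ : ℤ → Submodule ℤ M} {h : ℕ}
  (hgr : ∀ (n : ℕ) (n' : ℤ) (x : A), x ∈ 𝒜 n → ∀ m : M, m ∈ ℳ n' →
    x • m ∈ ℳ ((h : ℤ) * n + n'))

def gradedSMulHom {n : ℕ} {d k : ℤ} (hk : (h : ℤ) * n + d = k) (m : ℳ d) : 𝒜 n →ₗ[ℤ] ℳ k where
  toFun b := ⟨(b : A) • (m : M), hk ▸ hgr n d b b.2 m m.2⟩
  map_add' b c := Subtype.ext (add_smul (b : A) c (m : M))
  map_smul' z b := Subtype.ext (smul_assoc z (b : A) (m : M))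

lemma norm_gradedSMulHom_le (N : ∀ n, ℝ ⊗[ℤ] ↥(𝒜 n) → ℝ) (NM : ∀ n' : ℤ, ℝ ⊗[ℤ] ↥(ℳ n') → ℝ)
    (smulR : ∀ (n : ℕ) (n' : ℤ),
      (ℝ ⊗[ℤ] ↥(𝒜 n)) →ₗ[ℝ] (ℝ ⊗[ℤ] ↥(ℳ n')) →ₗ[ℝ] ℝ ⊗[ℤ] ↥(ℳ ((h : ℤ) * n + n')))
    (hsmulR : ∀ (n : ℕ) (n' : ℤ) (x : 𝒜 n) (m : ℳ n'),
      smulR n n' ((1 : ℝ) ⊗ₜ[ℤ] x) ((1 : ℝ) ⊗ₜ[ℤ] m)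
        = (1 : ℝ) ⊗ₜ[ℤ]
            (⟨(x : A) • (m : M), hgr n n' x x.2 m m.2⟩ : ℳ ((h : ℤ) * n + n')))
    (hsubM : ∀ (n : ℕ) (n' : ℤ) (x : ℝ ⊗[ℤ] ↥(𝒜 n)) (m : ℝ ⊗[ℤ] ↥(ℳ n')),
      NM ((h : ℤ) * n + n') (smulR n n' x m) ≤ N n x * NM n' m)
    {n : ℕ} {d k : ℤ} (hk : (h : ℤ) * n + d = k) (m : ℳ d) (b : 𝒜 n) :
    NM k ((1 : ℝ) ⊗ₜ[ℤ] gradedSMulHom hgr hk m b) ≤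
      N n ((1 : ℝ) ⊗ₜ[ℤ] b) * NM d ((1 : ℝ) ⊗ₜ[ℤ] m) := by
  subst hk
  exact hsmulR n d b m ▸ hsubM n d _ _

variable [Decomposition ℳ]

lemma decompose_eq_zero_of_neg (hneg : ∀ n' : ℤ, n' < 0 → ℳ n' = ⊥) (g : M)
    {d : ℤ} (hd : d < 0) : decompose ℳ g d = 0 := by
  simpa [hneg d hd] using (decompose ℳ g d).2

def smulComponentFamily {K : ℕ → ℕ} (E : ∀ n, Fin (K n) → 𝒜 n) (s : Finset M) (k : ℤ) :
    s × (Σ n : Fin (k.toNat + 1), Fin (K n)) → ℳ k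
  | ⟨g, n, i⟩ =>
    gradedSMulHom hgr (add_sub_cancel _ k) (decompose ℳ (g : M) (k - h * (n : ℕ))) (E n i)

lemma tmul_decompose_smul_eq_baseChange {n : ℕ} {b : A} (hb : b ∈ 𝒜 n) (g : M) (k : ℤ) :
    ((1 : ℚ) ⊗ₜ[ℤ] decompose ℳ (b • g) k : ℚ ⊗[ℤ] ℳ k) =
      (gradedSMulHom hgr (add_sub_cancel _ k) (decompose ℳ g (k - h * n))).baseChange ℚ
        ((1 : ℚ) ⊗ₜ[ℤ] (⟨b, hb⟩ : 𝒜 n)) := by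
  rw [LinearMap.baseChange_tmul]
  congr 1
  exact Subtype.ext (decompose_smul_of_shift ℳ (hgr n · b hb) g k)

lemma tmul_decompose_smul_mem_span (hh : 0 < h)
    (hneg : ∀ n' : ℤ, n' < 0 → ℳ n' = ⊥) {K : ℕ → ℕ} {E : ∀ n, Fin (K n) → 𝒜 n}
    (hE : ∀ n, Submodule.span ℚ (Set.range fun i => ((1 : ℚ) ⊗ₜ[ℤ] E n i : ℚ ⊗[ℤ] 𝒜 n)) = ⊤)
    {s : Finset M} {g : M} (hg : g ∈ s) {n : ℕ} {b : A} (hb : b ∈ 𝒜 n) (k : ℤ) :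
    ((1 : ℚ) ⊗ₜ[ℤ] decompose ℳ (b • g) k : ℚ ⊗[ℤ] ℳ k) ∈
      Submodule.span ℚ (Set.range fun p => (1 : ℚ) ⊗ₜ[ℤ] smulComponentFamily hgr E s k p) := by
  rw [tmul_decompose_smul_eq_baseChange hgr hb]
  rcases lt_or_ge k.toNat n with hkn | hnk
  · have hd : k - h * n < 0 := by
      have : (n : ℤ) ≤ h * n := le_mul_of_one_le_left (by positivity) (by exact_mod_cast hh)
      omega
    rw [decompose_eq_zero_of_neg hneg g hd, LinearMap.baseChange_tmul,
      show gradedSMulHom hgr _ 0 ⟨b, hb⟩ = 0 from Subtype.ext (smul_zero (b : A)),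
      TensorProduct.tmul_zero]
    exact zero_mem _
  · have hmem := Submodule.apply_mem_span_image_of_mem_span
      ((gradedSMulHom hgr (add_sub_cancel _ k) (decompose ℳ g (k - h * n))).baseChange ℚ)
      ((hE n).symm ▸ Submodule.mem_top : (1 : ℚ) ⊗ₜ[ℤ] (⟨b, hb⟩ : 𝒜 n) ∈ _)
    refine Submodule.span_mono ?_ hmem
    rintro _ ⟨_, ⟨i, rfl⟩, rfl⟩
    exact ⟨⟨⟨g, hg⟩, ⟨n, by omega⟩, i⟩, rfl⟩

theorem span_smulComponentFamily_eq_top [GradedRing 𝒜] (hh : 0 < h)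
    (hneg : ∀ n' : ℤ, n' < 0 → ℳ n' = ⊥) {s : Finset M}
    (hs : ∀ m : M, ∃ c : ℕ, 0 < c ∧ (c : ℤ) • m ∈ Submodule.span A (s : Set M))
    {K : ℕ → ℕ} {E : ∀ n, Fin (K n) → 𝒜 n}
    (hE : ∀ n, Submodule.span ℚ (Set.range fun i => ((1 : ℚ) ⊗ₜ[ℤ] E n i : ℚ ⊗[ℤ] 𝒜 n)) = ⊤)
    (k : ℤ) :
    Submodule.span ℚ (Set.range fun p => (1 : ℚ) ⊗ₜ[ℤ] smulComponentFamily hgr E s k p) = ⊤ := by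
  classical
  set W := Submodule.span ℚ (Set.range fun p => (1 : ℚ) ⊗ₜ[ℤ] smulComponentFamily hgr E s k p)
  let ψ : M →ₗ[ℤ] ℚ ⊗[ℤ] ℳ k := TensorProduct.mk ℤ ℚ (ℳ k) 1 ∘ₗ
    component ℤ ℤ (fun i => ℳ i) k ∘ₗ (decomposeLinearEquiv ℳ).toLinearMap
  have hψ : ∀ x ∈ Submodule.span A (s : Set M), ψ x ∈ W := by
    intro x hx
    obtain ⟨c, -, rfl⟩ := Submodule.mem_span_finset.1 hx
    rw [map_sum]
    refine sum_mem fun g hg => ?_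
    rw [← sum_support_decompose 𝒜 (c g), Finset.sum_smul, map_sum]
    exact sum_mem fun n _ =>
      tmul_decompose_smul_mem_span hgr hh hneg hE hg (decompose 𝒜 (c g) n).2 k
  have htop := Submodule.baseChange_span (R := ℤ) ℚ (Set.univ : Set (ℳ k))
  rw [Submodule.span_univ, Submodule.baseChange_top, Set.image_univ] at htop
  rw [eq_top_iff, htop, Submodule.span_le]
  rintro _ ⟨v, rfl⟩
  obtain ⟨c, hc, hcv⟩ := hs v
  have hψv : ψ ((c : ℤ) • (v : M)) = (c : ℚ) • ((1 : ℚ) ⊗ₜ[ℤ] v) := by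
    rw [map_zsmul, natCast_zsmul, Nat.cast_smul_eq_nsmul]
    exact congrArg (c • ·) (congrArg ((1 : ℚ) ⊗ₜ[ℤ] ·)
      (Subtype.ext (decompose_of_mem_same ℳ v.2)))
  have := hψ _ hcv
  rw [hψv] at this
  exact (Submodule.smul_mem_iff W (by positivity)).1 this

end HGradedModule

lemma rpow_le_max_mul_rpow_div {υ h D x y : ℝ} (hυ : 0 < υ) (hh : 0 < h)
    (hlo : y - D ≤ h * x) (hhi : h * x ≤ y) :
    υ ^ x ≤ max 1 (υ ^ (-D / h)) * υ ^ (y / h) := by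
  rcases le_or_gt 1 υ with hυ1 | hυ1
  · calc υ ^ x ≤ υ ^ (y / h) :=
          Real.rpow_le_rpow_of_exponent_le hυ1 (by rw [le_div_iff₀ hh]; linarith)
      _ ≤ max 1 (υ ^ (-D / h)) * υ ^ (y / h) :=
          le_mul_of_one_le_left (by positivity) (le_max_left _ _)
  · calc υ ^ x ≤ υ ^ (-D / h + y / h) := Real.rpow_le_rpow_of_exponent_ge hυ hυ1.le
          (by rw [← add_div, div_le_iff₀ hh]; linarith)
      _ = υ ^ (-D / h) * υ ^ (y / h) := Real.rpow_add hυ _ _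
      _ ≤ max 1 (υ ^ (-D / h)) * υ ^ (y / h) :=
          mul_le_mul_of_nonneg_right (le_max_right _ _) (by positivity)

lemma add_mul_rpow_mul_rpow_le {C a e υ h D x y : ℝ} (hC : 0 ≤ C) (ha : 0 ≤ a) (he : 0 ≤ e)
    (hυ : 0 < υ) (hh : 1 ≤ h) (hx : 0 ≤ x) (hy : 1 ≤ y) (hlo : y - D ≤ h * x)
    (hhi : h * x ≤ y) :
    (C + a * x ^ e) * υ ^ x ≤ (C + a) * max 1 (υ ^ (-D / h)) * y ^ e * υ ^ (y / h) := by
  have hcoef : C + a * x ^ e ≤ (C + a) * y ^ e := by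
    have h1 : 1 ≤ y ^ e := Real.one_le_rpow hy he
    have h2 : x ^ e ≤ y ^ e := Real.rpow_le_rpow hx (by nlinarith) he
    nlinarith
  calc (C + a * x ^ e) * υ ^ x
      ≤ ((C + a) * y ^ e) * (max 1 (υ ^ (-D / h)) * υ ^ (y / h)) :=
        mul_le_mul hcoef (rpow_le_max_mul_rpow_div hυ (by linarith) hlo hhi) (by positivity)
          (by positivity)
    _ = (C + a) * max 1 (υ ^ (-D / h)) * y ^ e * υ ^ (y / h) := by ring

/-- Let `(R,‖·‖)` be a normed graded ring over `ℤ` (graded pieces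
`𝒜 n ⊆ A`) and `(M,‖·‖_M)` a normed `h`-graded `(R,‖·‖)`-module (an `A`-module `M`
with a `ℤ`-grading `ℳ`, vanishing in negative degrees, with `M ⊗ ℚ` finitely generated
over `A ⊗ ℚ`).  If `λ_ℚ(Rₙ) ≤ A·nᵉ·υⁿ` for all `n ≥ 1`, then there is `A' > 0` with
`λ_ℚ(Mₙ) ≤ A'·nᵉ·υ^{n/h}` for all `n ≥ 1`. -/
theorem lambdaQ_module_estimate
    {A : Type*} [CommRing A] (𝒜 : ℕ → Submodule ℤ A) [GradedRing 𝒜]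
    [∀ n, Module.Finite ℤ ↥(𝒜 n)]
    (N : ∀ n, ℝ ⊗[ℤ] ↥(𝒜 n) → ℝ) (hN : ∀ n, IsNorm (N n))
    (mulR : ∀ m n, (ℝ ⊗[ℤ] ↥(𝒜 m)) →ₗ[ℝ] (ℝ ⊗[ℤ] ↥(𝒜 n)) →ₗ[ℝ] ℝ ⊗[ℤ] ↥(𝒜 (m + n)))
    (hmulR : ∀ m n (x : 𝒜 m) (y : 𝒜 n),
      mulR m n ((1 : ℝ) ⊗ₜ[ℤ] x) ((1 : ℝ) ⊗ₜ[ℤ] y)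
        = (1 : ℝ) ⊗ₜ[ℤ] (⟨(x : A) * (y : A), SetLike.mul_mem_graded x.2 y.2⟩ : 𝒜 (m + n)))
    (hsub : ∀ m n x y, N (m + n) (mulR m n x y) ≤ N m x * N n y)
    (h : ℕ) (hh : 0 < h)
    {M : Type*} [AddCommGroup M] [Module A M]
    (ℳ : ℤ → Submodule ℤ M) [DirectSum.Decomposition ℳ]
    [∀ n' : ℤ, Module.Finite ℤ ↥(ℳ n')]
    (hgr : ∀ (n : ℕ) (n' : ℤ) (x : A), x ∈ 𝒜 n → ∀ m : M, m ∈ ℳ n' →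
      x • m ∈ ℳ ((h : ℤ) * n + n'))
    (hneg : ∀ n' : ℤ, n' < 0 → ℳ n' = ⊥)
    (hfg : ∃ s : Finset M, ∀ m : M, ∃ k : ℕ, 0 < k ∧
      (k : ℤ) • m ∈ Submodule.span A (s : Set M))
    (NM : ∀ n' : ℤ, ℝ ⊗[ℤ] ↥(ℳ n') → ℝ) (hNM : ∀ n', IsNorm (NM n'))
    (smulR : ∀ (n : ℕ) (n' : ℤ),
      (ℝ ⊗[ℤ] ↥(𝒜 n)) →ₗ[ℝ] (ℝ ⊗[ℤ] ↥(ℳ n')) →ₗ[ℝ] ℝ ⊗[ℤ] ↥(ℳ ((h : ℤ) * n + n')))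
    (hsmulR : ∀ (n : ℕ) (n' : ℤ) (x : 𝒜 n) (m : ℳ n'),
      smulR n n' ((1 : ℝ) ⊗ₜ[ℤ] x) ((1 : ℝ) ⊗ₜ[ℤ] m)
        = (1 : ℝ) ⊗ₜ[ℤ]
            (⟨(x : A) • (m : M), hgr n n' x x.2 m m.2⟩ : ℳ ((h : ℤ) * n + n')))
    (hsubM : ∀ (n : ℕ) (n' : ℤ) (x : ℝ ⊗[ℤ] ↥(𝒜 n)) (m : ℝ ⊗[ℤ] ↥(ℳ n')),
      NM ((h : ℤ) * n + n') (smulR n n' x m) ≤ N n x * NM n' m)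
    (Ac e υ : ℝ) (hAc : 0 < Ac) (he : 0 < e) (hυ : 0 < υ)
    (hbound : ∀ n : ℕ, 1 ≤ n → lambdaQ (N n) ≤ Ac * (n : ℝ) ^ e * υ ^ (n : ℝ)) :
    ∃ A' : ℝ, 0 < A' ∧ ∀ n' : ℤ, 1 ≤ n' →
      lambdaQ (NM n') ≤ A' * (n' : ℝ) ^ e * υ ^ ((n' : ℝ) / (h : ℝ)) := by
  classical
  obtain ⟨s, hs⟩ := hfg
  obtain ⟨D, hD⟩ := exists_decompose_eq_zero_of_lt ℳ s
  obtain ⟨G, hG0, hG⟩ := exists_norm_decompose_le ℳ NM (fun d => (hNM d).map_zero) 1 s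
  set C := |lambdaQ (N 0)| + 1
  -- the `C υⁿ` summand makes `B 0` exceed `λ_ℚ(R₀)` without spoiling `B n = O(nᵉ υⁿ)`
  set B : ℕ → ℝ := fun n => (C + Ac * (n : ℝ) ^ e) * υ ^ (n : ℝ)
  have hB : ∀ n, lambdaQ (N n) < B n := by
    intro n
    rcases Nat.eq_zero_or_pos n with rfl | hn
    · simpa [B, Real.zero_rpow he.ne'] using (le_abs_self _).trans_lt (lt_add_one _)
    · have : 0 < C * υ ^ (n : ℝ) := by positivity
      linarith [hbound n hn]
  choose K E hEspan hEle using fun n => exists_span_le_of_lambdaQ_lt (hB n)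
  refine ⟨(C + Ac) * max 1 (υ ^ (-D / h : ℝ)) * G, by positivity, fun k hk => ?_⟩
  refine lambdaQ_le_of_span _ (span_smulComponentFamily_eq_top hgr hh hneg hs hEspan k)
    (by positivity) ?_
  rintro ⟨⟨g, hg⟩, n, i⟩
  refine (norm_gradedSMulHom_le hgr N NM smulR hsmulR hsubM _ _ _).trans ?_
  set d := k - h * (n : ℕ)
  by_cases hd : DirectSum.decompose ℳ g d = 0
  · rw [hd, TensorProduct.tmul_zero, (hNM d).map_zero, mul_zero]
    positivity
  have hd0 : 0 ≤ d := not_lt.1 fun hlt => hd (decompose_eq_zero_of_neg hneg g hlt)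
  have hdD : d ≤ D := not_lt.1 fun hlt => hd (hD g hg d hlt)
  have hlo : (k : ℝ) - D ≤ h * (n : ℕ) := by exact_mod_cast (show k - D ≤ h * (n : ℕ) by omega)
  have hhi : (h : ℝ) * (n : ℕ) ≤ k := by exact_mod_cast (show h * (n : ℕ) ≤ k by omega)
  calc N n ((1 : ℝ) ⊗ₜ[ℤ] E n i) * NM d ((1 : ℝ) ⊗ₜ[ℤ] DirectSum.decompose ℳ g d)
      ≤ B n * G := mul_le_mul (hEle n i) (hG g hg d) ((hNM d).nonneg _) (by positivity)
    _ ≤ ((C + Ac) * max 1 (υ ^ (-D / h : ℝ)) * (k : ℝ) ^ e * υ ^ ((k : ℝ) / h)) * G :=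
        mul_le_mul_of_nonneg_right (add_mul_rpow_mul_rpow_le (by positivity) hAc.le he.le hυ
          (by exact_mod_cast hh) (by positivity) (by exact_mod_cast hk) hlo hhi) hG0.le
    _ = (C + Ac) * max 1 (υ ^ (-D / h : ℝ)) * G * (k : ℝ) ^ e * υ ^ ((k : ℝ) / h) := by ring
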